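/- arXiv:2403.03323 — 10 statements merged into one kernel-verified Lean document; each statement's English description precedes it below -/
import Mathlib

section
/- Soundness of the FEHL rule (∀-Step): let the first universally quantified program have the form P₁;P₂. Suppose (i) the relational Hoare triple {Φ} P₁ {Φ'} is valid, in the sense that for all states σ₁,…,σ_{k+l} with (σ₁,…,σ_{k+l}) ⊨ Φ and every state σ'₁ with ⟦P₁⟧(σ₁,σ'₁) we have (σ'₁,σ₂,…,σ_{k+l}) ⊨ Φ', and (ii) the FEHT ⟨Φ'⟩ P₂ ⊛ χ∀ ⊛∃ χ∃ ⟨Ψ⟩ is valid. Then the FEHT ⟨Φ⟩ (P₁;P₂) ⊛ χ∀ ⊛∃ χ∃ ⟨Ψ⟩ is valid. -/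
/-- Program variables. -/
abbrev Var := String

/-- Program states: functions from variables to integers. -/
abbrev State := Var → ℤ

/-- Commands of a simple imperative language over integer-valued variables. -/
inductive Cmd where
  | skip : Cmd
  | assign : Var → (State → ℤ) → Cmd
  | havoc : Var → Cmd                       -- x := ⋆
  | assume : (State → Prop) → Cmd
  | cond : (State → Prop) → Cmd → Cmd → Cmd -- if(b,P,Q)
  | loop : (State → Prop) → Cmd → Cmd       -- while(b,P)
  | seq : Cmd → Cmd → Cmd

/-- Standard big-step operational semantics: `BigStep P σ σ'` means P,
executed from σ, can terminate in σ'. -/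
inductive BigStep : Cmd → State → State → Prop where
  | skip (σ : State) : BigStep .skip σ σ
  | assign (x : Var) (e : State → ℤ) (σ : State) :
      BigStep (.assign x e) σ (Function.update σ x (e σ))
  | havoc (x : Var) (σ : State) (v : ℤ) :
      BigStep (.havoc x) σ (Function.update σ x v)
  | assume (b : State → Prop) (σ : State) (h : b σ) : BigStep (.assume b) σ σ
  | condTrue (b : State → Prop) (P Q : Cmd) (σ σ' : State) (hb : b σ)
      (h : BigStep P σ σ') : BigStep (.cond b P Q) σ σ'
  | condFalse (b : State → Prop) (P Q : Cmd) (σ σ' : State) (hb : ¬ b σ)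
      (h : BigStep Q σ σ') : BigStep (.cond b P Q) σ σ'
  | loopFalse (b : State → Prop) (P : Cmd) (σ : State) (hb : ¬ b σ) :
      BigStep (.loop b P) σ σ
  | loopTrue (b : State → Prop) (P : Cmd) (σ σ' σ'' : State) (hb : b σ)
      (h1 : BigStep P σ σ') (h2 : BigStep (.loop b P) σ' σ'') :
      BigStep (.loop b P) σ σ''
  | seq (P Q : Cmd) (σ σ' σ'' : State) (h1 : BigStep P σ σ')
      (h2 : BigStep Q σ' σ'') : BigStep (.seq P Q) σ σ''

/-- Validity of a Forall-Exist Hoare Tuple (FEHT)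
`⟨Φ⟩ Pa 0 ⊛ … ⊛ Pa (k-1) ⊛∃ Pe 0 ⊛ … ⊛ Pe (l-1) ⟨Ψ⟩`:
the k universally quantified program copies and the l existentially
quantified ones run over disjoint variables, so the (k+l)-tuple of states
is represented as a pair of tuples. -/
def FEHT {k l : ℕ} (Pa : Fin k → Cmd) (Pe : Fin l → Cmd)
    (Φ Ψ : (Fin k → State) → (Fin l → State) → Prop) : Prop :=
  ∀ σa σe, Φ σa σe →
    ∀ σa' : Fin k → State, (∀ i, BigStep (Pa i) (σa i) (σa' i)) →
      ∃ σe' : Fin l → State, (∀ i, BigStep (Pe i) (σe i) (σe' i)) ∧ Ψ σa' σe'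

/-- Soundness of the FEHL rule (∀-Step). -/
theorem forall_step_sound (k l : ℕ) (P₁ P₂ : Cmd) (Qa : Fin k → Cmd) (Pe : Fin l → Cmd)
    (Φ Φ' Ψ : (Fin (k + 1) → State) → (Fin l → State) → Prop)
    (h1 : ∀ σa σe, Φ σa σe → ∀ σ₁' : State, BigStep P₁ (σa 0) σ₁' →
        Φ' (Function.update σa 0 σ₁') σe)
    (h2 : FEHT (Fin.cons P₂ Qa) Pe Φ' Ψ) :
    FEHT (Fin.cons (Cmd.seq P₁ P₂) Qa) Pe Φ Ψ := by
  intro σa σe hΦ σa' hrun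
  have h0 := hrun 0
  simp only [Fin.cons_zero] at h0
  cases h0 with
  | seq _ _ _ σm _ hP1 hP2 =>
    have hΦ' := h1 σa σe hΦ σm hP1
    apply h2 (Function.update σa 0 σm) σe hΦ' σa'
    intro i
    refine Fin.cases ?_ ?_ i
    · simpa [Function.update] using hP2
    · intro j
      have := hrun j.succ
      simpa [Function.update, Fin.succ_ne_zero] using this
end

section
/- Soundness of the FEHL rule (∃-Step): let the first existentially quantified program have the form P₁;P₂. Suppose (i) the relational underapproximate Hoare triple ⟨Φ⟩ P₁ ⟨Φ'⟩ is valid, in the sense that for all states σ₁,…,σ_{k+l} with (σ₁,…,σ_{k+l}) ⊨ Φ there exists a state σ'_{k+1} with ⟦P₁⟧(σ_{k+1},σ'_{k+1}) such that (σ₁,…,σ_k,σ'_{k+1},σ_{k+2},…,σ_{k+l}) ⊨ Φ', and (ii) the FEHT ⟨Φ'⟩ χ∀ ⊛∃ P₂ ⊛ χ∃ ⟨Ψ⟩ is valid. Then the FEHT ⟨Φ⟩ χ∀ ⊛∃ (P₁;P₂) ⊛ χ∃ ⟨Ψ⟩ is valid. -/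
/-- Soundness of the FEHL rule (∃-Step). -/
theorem exists_step_sound (k l : ℕ) (Pa : Fin k → Cmd) (P₁ P₂ : Cmd) (Qe : Fin l → Cmd)
    (Φ Φ' Ψ : (Fin k → State) → (Fin (l + 1) → State) → Prop)
    (h1 : ∀ σa σe, Φ σa σe → ∃ σ' : State, BigStep P₁ (σe 0) σ' ∧
        Φ' σa (Function.update σe 0 σ'))
    (h2 : FEHT Pa (Fin.cons P₂ Qe) Φ' Ψ) :
    FEHT Pa (Fin.cons (Cmd.seq P₁ P₂) Qe) Φ Ψ := by
  intro σa σe hΦ σa' hBa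
  obtain ⟨σ', hP₁, hΦ'⟩ := h1 σa σe hΦ
  obtain ⟨σe', hBe, hΨ⟩ := h2 σa (Function.update σe 0 σ') hΦ' σa' hBa
  refine ⟨σe', fun i => ?_, hΨ⟩
  refine Fin.cases ?_ ?_ i
  · have := hBe 0
    simp only [Fin.cons_zero, Function.update_self] at this ⊢
    exact BigStep.seq _ _ _ _ _ hP₁ this
  · intro j
    have := hBe j.succ
    simpa [Function.update_of_ne (Fin.succ_ne_zero j)] using this
end

section
/- Soundness of the FEHL rule (∀-If): let the first universally quantified program have the form if(b,P₁,P₂);P₃, where b is evaluated in the state of the first program copy. If the FEHTs ⟨Φ ∧ b⟩ (P₁;P₃) ⊛ χ∀ ⊛∃ χ∃ ⟨Ψ⟩ and ⟨Φ ∧ ¬b⟩ (P₂;P₃) ⊛ χ∀ ⊛∃ χ∃ ⟨Ψ⟩ are both valid (where Φ ∧ b holds in a tuple of states iff Φ holds and b evaluates to true in the first component), then the FEHT ⟨Φ⟩ (if(b,P₁,P₂);P₃) ⊛ χ∀ ⊛∃ χ∃ ⟨Ψ⟩ is valid. -/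
/-- Soundness of the FEHL rule (∀-If). -/
theorem forall_if_sound (k l : ℕ) (b : State → Prop) (P₁ P₂ P₃ : Cmd)
    (Qa : Fin k → Cmd) (Pe : Fin l → Cmd)
    (Φ Ψ : (Fin (k + 1) → State) → (Fin l → State) → Prop)
    (h1 : FEHT (Fin.cons (Cmd.seq P₁ P₃) Qa) Pe (fun σa σe => Φ σa σe ∧ b (σa 0)) Ψ)
    (h2 : FEHT (Fin.cons (Cmd.seq P₂ P₃) Qa) Pe (fun σa σe => Φ σa σe ∧ ¬ b (σa 0)) Ψ) :
    FEHT (Fin.cons (Cmd.seq (Cmd.cond b P₁ P₂) P₃) Qa) Pe Φ Ψ := by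
  intro σa σe hΦ σa' hstep
  have h0 := hstep 0
  simp only [Fin.cons_zero] at h0
  cases h0 with
  | seq _ _ _ τ _ hc h3 =>
    cases hc with
    | condTrue _ _ _ _ _ hb hP =>
      exact h1 σa σe ⟨hΦ, hb⟩ σa' (fun i => by
        refine Fin.cases ?_ ?_ i
        · exact BigStep.seq _ _ _ _ _ hP h3
        · intro j; simpa using hstep j.succ)
    | condFalse _ _ _ _ _ hb hP =>
      exact h2 σa σe ⟨hΦ, hb⟩ σa' (fun i => by
        refine Fin.cases ?_ ?_ i
        · exact BigStep.seq _ _ _ _ _ hP h3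
        · intro j; simpa using hstep j.succ)
end

section
/- Soundness of the FEHL rule (∀-Assume): let the first universally quantified program have the form assume(b);P, where b is evaluated in the state of the first program copy. If the FEHT ⟨Φ ∧ b⟩ P ⊛ χ∀ ⊛∃ χ∃ ⟨Ψ⟩ is valid, then the FEHT ⟨Φ⟩ (assume(b);P) ⊛ χ∀ ⊛∃ χ∃ ⟨Ψ⟩ is valid. -/
/-- Soundness of the FEHL rule (∀-Assume). -/
theorem forall_assume_sound (k l : ℕ) (b : State → Prop) (P : Cmd)
    (Qa : Fin k → Cmd) (Pe : Fin l → Cmd)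
    (Φ Ψ : (Fin (k + 1) → State) → (Fin l → State) → Prop)
    (h : FEHT (Fin.cons P Qa) Pe (fun σa σe => Φ σa σe ∧ b (σa 0)) Ψ) :
    FEHT (Fin.cons (Cmd.seq (Cmd.assume b) P) Qa) Pe Φ Ψ := by
  intro σa σe hΦ σa' hsteps
  have h0 := hsteps 0
  simp only [Fin.cons_zero] at h0
  rcases h0 with _ | _ | _ | _ | _ | _ | _ | _ | ⟨_, _, _, σm, _, h1, h2⟩
  rcases h1 with _ | _ | _ | ⟨_, _, hb⟩
  exact h σa σe ⟨hΦ, hb⟩ σa' (fun i => by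
    refine Fin.cases ?_ ?_ i
    · simpa using h2
    · intro j; simpa using hsteps j.succ)
end

section
/- Soundness of the FEHL rule (∃-Assume): let the first existentially quantified program have the form assume(b);P, where b is evaluated in the state of the (k+1)-st program copy. If every tuple of states satisfying Φ satisfies b (i.e., Φ ⇒ b) and the FEHT ⟨Φ⟩ χ∀ ⊛∃ P ⊛ χ∃ ⟨Ψ⟩ is valid, then the FEHT ⟨Φ⟩ χ∀ ⊛∃ (assume(b);P) ⊛ χ∃ ⟨Ψ⟩ is valid. -/
/-- Soundness of the FEHL rule (∃-Assume). -/
theorem exists_assume_sound (k l : ℕ) (Pa : Fin k → Cmd) (b : State → Prop) (P : Cmd)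
    (Qe : Fin l → Cmd)
    (Φ Ψ : (Fin k → State) → (Fin (l + 1) → State) → Prop)
    (himp : ∀ σa σe, Φ σa σe → b (σe 0))
    (h : FEHT Pa (Fin.cons P Qe) Φ Ψ) :
    FEHT Pa (Fin.cons (Cmd.seq (Cmd.assume b) P) Qe) Φ Ψ := by
  intro σa σe hΦ σa' hstep
  obtain ⟨σe', hsteps, hΨ⟩ := h σa σe hΦ σa' hstep
  refine ⟨σe', fun i => ?_, hΨ⟩
  refine Fin.cases ?_ (fun j => ?_) i
  · have := hsteps 0
    rw [Fin.cons_zero] at this ⊢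
    exact BigStep.seq _ _ _ _ _ (BigStep.assume b _ (himp σa σe hΦ)) this
  · have := hsteps j.succ
    rw [Fin.cons_succ] at this ⊢
    exact this
end

section
/- Soundness of the FEHL rule (∀-Choice): let the first universally quantified program have the form x := ⋆;P. If the FEHT ⟨∃x.Φ⟩ P ⊛ χ∀ ⊛∃ χ∃ ⟨Ψ⟩ is valid, where ∃x.Φ holds in a tuple of states iff Φ holds for some value of the variable x of the first program copy (all other variables unchanged), then the FEHT ⟨Φ⟩ (x := ⋆;P) ⊛ χ∀ ⊛∃ χ∃ ⟨Ψ⟩ is valid. -/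
/-- Soundness of the FEHL rule (∀-Choice). -/
theorem forall_choice_sound (k l : ℕ) (x : Var) (P : Cmd)
    (Qa : Fin k → Cmd) (Pe : Fin l → Cmd)
    (Φ Ψ : (Fin (k + 1) → State) → (Fin l → State) → Prop)
    (h : FEHT (Fin.cons P Qa) Pe
        (fun σa σe => ∃ v : ℤ,
          Φ (Function.update σa 0 (Function.update (σa 0) x v)) σe) Ψ) :
    FEHT (Fin.cons (Cmd.seq (Cmd.havoc x) P) Qa) Pe Φ Ψ := by
  intro σa σe hΦ σa' hstep
  have h0 := hstep 0
  simp only [Fin.cons_zero] at h0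
  obtain ⟨v, h2⟩ : ∃ v, BigStep P (Function.update (σa 0) x v) (σa' 0) := by
    rcases h0 with _ | _ | _ | _ | _ | _ | _ | _ | ⟨_, _, _, mid, _, h1, h2⟩
    cases h1
    exact ⟨_, h2⟩
  -- apply h at the intermediate tuple
  have hpre : ∃ v' : ℤ,
      Φ (Function.update (Function.update σa 0 (Function.update (σa 0) x v)) 0
          (Function.update ((Function.update σa 0 (Function.update (σa 0) x v)) 0) x v')) σe := by
    refine ⟨σa 0 x, ?_⟩
    have : Function.update (Function.update σa 0 (Function.update (σa 0) x v)) 0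
        (Function.update ((Function.update σa 0 (Function.update (σa 0) x v)) 0) x (σa 0 x))
        = σa := by
      funext i
      rcases eq_or_ne i 0 with rfl | hi
      · simp [Function.update_self]
      · simp [Function.update_of_ne hi]
    rw [this]; exact hΦ
  have := h (Function.update σa 0 (Function.update (σa 0) x v)) σe hpre σa' ?_
  · exact this
  · intro i
    rcases eq_or_ne i 0 with rfl | hi
    · simpa using h2
    · obtain ⟨j, rfl⟩ := Fin.exists_succ_eq.mpr hi
      have := hstep j.succ
      simpa [Function.update_of_ne (Fin.succ_ne_zero j)] using this
end

section
/- Soundness of the FEHL rule (∃-Choice): let the first existentially quantified program have the form x := ⋆;P, and let e be an arithmetic expression over the variables of that program copy with x ∉ Vars(e). If the FEHT ⟨(∃x.Φ) ∧ x = e⟩ χ∀ ⊛∃ P ⊛ χ∃ ⟨Ψ⟩ is valid, where ∃x.Φ holds in a tuple of states iff Φ holds for some value of the variable x of the (k+1)-st copy, and x = e requires that x equals the value of e in that copy's state, then the FEHT ⟨Φ⟩ χ∀ ⊛∃ (x := ⋆;P) ⊛ χ∃ ⟨Ψ⟩ is valid. -/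
/-- Soundness of the FEHL rule (∃-Choice): `e` is an expression over the
variables of the first existentially quantified copy with x ∉ Vars(e),
rendered semantically as: the value of e does not depend on x. -/
theorem exists_choice_sound (k l : ℕ) (Pa : Fin k → Cmd) (x : Var) (e : State → ℤ)
    (P : Cmd) (Qe : Fin l → Cmd)
    (Φ Ψ : (Fin k → State) → (Fin (l + 1) → State) → Prop)
    (he : ∀ (σ : State) (v : ℤ), e (Function.update σ x v) = e σ)
    (h : FEHT Pa (Fin.cons P Qe)
        (fun σa σe =>
          (∃ v : ℤ, Φ σa (Function.update σe 0 (Function.update (σe 0) x v))) ∧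
          σe 0 x = e (σe 0)) Ψ) :
    FEHT Pa (Fin.cons (Cmd.seq (Cmd.havoc x) P) Qe) Φ Ψ := by
  intro σa σe hΦ σa' ha
  set τ : State := Function.update (σe 0) x (e (σe 0)) with hτ
  set σe₀ : Fin (l+1) → State := Function.update σe 0 τ with hσe₀
  have hpre : (∃ v : ℤ, Φ σa (Function.update σe₀ 0 (Function.update (σe₀ 0) x v))) ∧
      σe₀ 0 x = e (σe₀ 0) := by
    constructor
    · refine ⟨σe 0 x, ?_⟩
      have h1 : σe₀ 0 = τ := by simp [hσe₀]
      have h2 : Function.update τ x (σe 0 x) = σe 0 := by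
        funext y
        by_cases hy : y = x <;> simp [Function.update, hy, hτ]
      have h3 : Function.update σe₀ 0 (σe 0) = σe := by
        funext i
        by_cases hi : i = 0 <;> simp [Function.update, hi, hσe₀]
      rw [h1, h2, h3]; exact hΦ
    · have h1 : σe₀ 0 = τ := by simp [hσe₀]
      rw [h1, hτ]
      simp [he]
  obtain ⟨σe', hstep, hΨ⟩ := h σa σe₀ hpre σa' ha
  refine ⟨σe', ?_, hΨ⟩
  intro i
  refine Fin.cases ?_ ?_ i
  · have := hstep 0
    simp only [Fin.cons_zero] at this ⊢
    exact BigStep.seq _ _ _ τ _ (by rw [hτ]; exact BigStep.havoc x (σe 0) _)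
      (by have h1 : σe₀ 0 = τ := by simp [hσe₀]
          rw [← h1]; exact this)
  · intro j
    have := hstep j.succ
    have h2 : σe₀ j.succ = σe j.succ := by
      simp [hσe₀, Function.update, Fin.succ_ne_zero]
    simpa [h2] using this
end

section
/- Soundness of the FEHL rule (Loop-Counting): suppose the first k ≥ 1 universally and l existentially quantified programs have the forms while(b_i,P_i);Q_i for i ∈ [1,k+l] (each b_i, P_i, Q_i over the i-th copy's variables). Let B ≥ 1, let c₁,…,c_{k+l} ∈ [1,B], let I be an assertion with I = I₁ = I_{B+1} for assertions I₁,…,I_{B+1}, and assume: (1) Φ ⇒ I; (2) I implies that all loop guards agree, i.e., I ⇒ ⋀_{i=2}^{k+l}(b₁ ↔ b_i); (3) for every j ∈ [1,B], the FEHT with precondition I_j ∧ ⋀_{i: c_i ≥ j} b_i, universally quantified programs P_i for those i ∈ [1,k] with c_i ≥ j, existentially quantified programs P_i for those i ∈ [k+1,k+l] with c_i ≥ j (all other copies idle, i.e., their states are unchanged), and postcondition I_{j+1} ∧ ⋀_{i: c_i > j} b_i, is valid; and (4) the FEHT ⟨I ∧ ⋀_{i=1}^{k+l} ¬b_i⟩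 Q₁ ⊛ … ⊛ Q_k ⊛ χ∀ ⊛∃ Q_{k+1} ⊛ … ⊛ Q_{k+l} ⊛ χ∃ ⟨Ψ⟩ is valid. Then the FEHT ⟨Φ⟩ (while(b₁,P₁);Q₁) ⊛ … ⊛ (while(b_k,P_k);Q_k) ⊛ χ∀ ⊛∃ (while(b_{k+1},P_{k+1});Q_{k+1}) ⊛ … ⊛ (while(b_{k+l},P_{k+l});Q_{k+l}) ⊛ χ∃ ⟨Ψ⟩ is valid. -/
/-- Loop executions with an explicit iteration count. -/
def LoopIter (b : State → Prop) (P : Cmd) : ℕ → State → State → Prop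
  | 0 => fun σ σ' => ¬ b σ ∧ σ' = σ
  | nn+1 => fun σ σ' => b σ ∧ ∃ τ, BigStep P σ τ ∧ LoopIter b P nn τ σ'

lemma LoopIter.bigStep {b : State → Prop} {P : Cmd} :
    ∀ {nn : ℕ} {σ σ' : State}, LoopIter b P nn σ σ' → BigStep (.loop b P) σ σ' := by
  intro nn
  induction nn with
  | zero => rintro σ σ' ⟨hb, rfl⟩; exact .loopFalse _ _ _ hb
  | succ nn ih =>
    rintro σ σ' ⟨hb, τ, h1, h2⟩
    exact .loopTrue _ _ _ _ _ hb h1 (ih h2)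

lemma bigStep_loopIter_aux {c : Cmd} {σ σ' : State} (h : BigStep c σ σ') :
    ∀ b P, c = Cmd.loop b P → ∃ nn, LoopIter b P nn σ σ' := by
  induction h with
  | loopFalse b' P' σ hb =>
    intro b P hEq
    injection hEq with h1 h2; subst h1; subst h2
    exact ⟨0, hb, rfl⟩
  | loopTrue b' P' σ τ σ'' hb h1 h2 ih1 ih2 =>
    intro b P hEq
    injection hEq with h1' h2'; subst h1'; subst h2'
    obtain ⟨nn, hn⟩ := ih2 _ _ rfl
    exact ⟨nn + 1, hb, τ, h1, hn⟩
  | skip => intro b P hEq; exact absurd hEq (by simp)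
  | assign => intro b P hEq; exact absurd hEq (by simp)
  | havoc => intro b P hEq; exact absurd hEq (by simp)
  | assume => intro b P hEq; exact absurd hEq (by simp)
  | condTrue => intro b P hEq; exact absurd hEq (by simp)
  | condFalse => intro b P hEq; exact absurd hEq (by simp)
  | seq => intro b P hEq; exact absurd hEq (by simp)

lemma bigStep_loopIter {b : State → Prop} {P : Cmd} {σ σ' : State}
    (h : BigStep (.loop b P) σ σ') : ∃ nn, LoopIter b P nn σ σ' :=
  bigStep_loopIter_aux h b P rfl

lemma seq_inv {P Q : Cmd} {σ σ' : State} (h : BigStep (.seq P Q) σ σ') :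
    ∃ τ, BigStep P σ τ ∧ BigStep Q τ σ' := by
  cases h with
  | seq _ _ _ τ _ h1 h2 => exact ⟨τ, h1, h2⟩

lemma skip_inv {σ σ' : State} (h : BigStep .skip σ σ') : σ' = σ := by
  cases h; rfl

lemma loop_inv_false {b : State → Prop} {P : Cmd} {σ σ' : State}
    (hb : ¬ b σ) (h : BigStep (.loop b P) σ σ') : σ' = σ := by
  cases h with
  | loopFalse => rfl
  | loopTrue _ _ _ _ _ hb' => exact absurd hb' hb

lemma loop_inv_true {b : State → Prop} {P : Cmd} {σ σ' : State}
    (hb : b σ) (h : BigStep (.loop b P) σ σ') :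
    ∃ τ, BigStep P σ τ ∧ BigStep (.loop b P) τ σ' := by
  cases h with
  | loopFalse _ _ _ hb' => exact absurd hb hb'
  | loopTrue _ _ _ τ _ _ h1 h2 => exact ⟨τ, h1, h2⟩

/-- Soundness of the FEHL rule (Loop-Counting): the first k ≥ 1 universally
and l existentially quantified programs are `while(bᵢ,Pᵢ);Qᵢ`; `Ra`/`Re`
are the remaining universally/existentially quantified programs χ∀, χ∃. -/
theorem loop_counting_sound (k l m n : ℕ) (hk : 0 < k)
    (ba : Fin k → State → Prop) (Pa Qa : Fin k → Cmd)
    (be : Fin l → State → Prop) (Pe Qe : Fin l → Cmd)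
    (Ra : Fin m → Cmd) (Re : Fin n → Cmd)
    (B : ℕ) (hB : 1 ≤ B)
    (ca : Fin k → ℕ) (ce : Fin l → ℕ)
    (hca : ∀ i, 1 ≤ ca i ∧ ca i ≤ B) (hce : ∀ i, 1 ≤ ce i ∧ ce i ≤ B)
    (I : (Fin (k + m) → State) → (Fin (l + n) → State) → Prop)
    (Ii : ℕ → (Fin (k + m) → State) → (Fin (l + n) → State) → Prop)
    (Φ Ψ : (Fin (k + m) → State) → (Fin (l + n) → State) → Prop)
    (hI1 : Ii 1 = I) (hIB : Ii (B + 1) = I)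
    -- (1) Φ ⇒ I
    (hinit : ∀ σa σe, Φ σa σe → I σa σe)
    -- (2) I implies that all loop guards agree with the first guard b₁
    (hsim : ∀ σa σe, I σa σe →
      (∀ i : Fin k, ba i (σa (Fin.castAdd m i)) ↔ ba ⟨0, hk⟩ (σa (Fin.castAdd m ⟨0, hk⟩))) ∧
      (∀ i : Fin l, be i (σe (Fin.castAdd n i)) ↔ ba ⟨0, hk⟩ (σa (Fin.castAdd m ⟨0, hk⟩))))
    -- (3) for each j ∈ [1,B]: execute the bodies of all loops with cᵢ ≥ j
    --     (all other copies idle) under guard information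
    (hstep : ∀ j, 1 ≤ j → j ≤ B →
      FEHT (Fin.append (fun i : Fin k => if j ≤ ca i then Pa i else Cmd.skip)
              (fun _ : Fin m => Cmd.skip))
           (Fin.append (fun i : Fin l => if j ≤ ce i then Pe i else Cmd.skip)
              (fun _ : Fin n => Cmd.skip))
           (fun σa σe => Ii j σa σe ∧
              (∀ i : Fin k, j ≤ ca i → ba i (σa (Fin.castAdd m i))) ∧
              (∀ i : Fin l, j ≤ ce i → be i (σe (Fin.castAdd n i))))
           (fun σa σe => Ii (j + 1) σa σe ∧
              (∀ i : Fin k, j < ca i → ba i (σa (Fin.castAdd m i))) ∧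
              (∀ i : Fin l, j < ce i → be i (σe (Fin.castAdd n i)))))
    -- (4) the FEHT for the program suffixes after the loops
    (hrest : FEHT (Fin.append Qa Ra) (Fin.append Qe Re)
        (fun σa σe => I σa σe ∧
          (∀ i : Fin k, ¬ ba i (σa (Fin.castAdd m i))) ∧
          (∀ i : Fin l, ¬ be i (σe (Fin.castAdd n i))))
        Ψ) :
    FEHT (Fin.append (fun i : Fin k => Cmd.seq (Cmd.loop (ba i) (Pa i)) (Qa i)) Ra)
         (Fin.append (fun i : Fin l => Cmd.seq (Cmd.loop (be i) (Pe i)) (Qe i)) Re)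
         Φ Ψ := by
  classical
  set i0 : Fin k := ⟨0, hk⟩ with hi0
  -- Main lemma: starting from `I`, the existential loops can fully track the
  -- universal loops, by strong induction on the iteration count of copy 0.
  have main : ∀ N : ℕ, ∀ τa : Fin (k+m) → State, ∀ τe : Fin (l+n) → State,
      ∀ σmid : Fin k → State,
      I τa τe →
      (∀ i : Fin k, BigStep (.loop (ba i) (Pa i)) (τa (Fin.castAdd m i)) (σmid i)) →
      LoopIter (ba i0) (Pa i0) N (τa (Fin.castAdd m i0)) (σmid i0) →
      ∃ τe' : Fin (l+n) → State,
        (∀ i : Fin l, BigStep (.loop (be i) (Pe i)) (τe (Fin.castAdd n i))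
            (τe' (Fin.castAdd n i))) ∧
        (∀ i : Fin n, τe' (Fin.natAdd l i) = τe (Fin.natAdd l i)) ∧
        I (Fin.append σmid (fun i => τa (Fin.natAdd k i))) τe' ∧
        (∀ i : Fin k, ¬ ba i (σmid i)) ∧
        (∀ i : Fin l, ¬ be i (τe' (Fin.castAdd n i))) := by
    intro N
    induction N using Nat.strong_induction_on with
    | _ N IH =>
    intro τa τe σmid hIτ hloops hcount
    by_cases hb0 : ba i0 (τa (Fin.castAdd m i0))
    · -- all guards are true: run one round of B steps, then recurse
      have hga1 : ∀ i : Fin k, ba i (τa (Fin.castAdd m i)) := fun i =>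
        ((hsim τa τe hIτ).1 i).mpr hb0
      have hge1 : ∀ i : Fin l, be i (τe (Fin.castAdd n i)) := fun i =>
        ((hsim τa τe hIτ).2 i).mpr hb0
      -- invariant after j-1 steps of the round
      set Inv : ℕ → Prop := fun j => ∃ υa υe,
        Ii j υa υe ∧
        (∀ i : Fin m, υa (Fin.natAdd k i) = τa (Fin.natAdd k i)) ∧
        (∀ i : Fin n, υe (Fin.natAdd l i) = τe (Fin.natAdd l i)) ∧
        (∀ i : Fin k, j ≤ ca i → ba i (υa (Fin.castAdd m i))) ∧
        (∀ i : Fin l, j ≤ ce i → be i (υe (Fin.castAdd n i))) ∧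
        (∀ i : Fin k, BigStep (.loop (ba i) (Pa i)) (υa (Fin.castAdd m i)) (σmid i)) ∧
        (∀ i : Fin l, ∀ σf, BigStep (.loop (be i) (Pe i)) (υe (Fin.castAdd n i)) σf →
            BigStep (.loop (be i) (Pe i)) (τe (Fin.castAdd n i)) σf) ∧
        (∃ nn, LoopIter (ba i0) (Pa i0) nn (υa (Fin.castAdd m i0)) (σmid i0) ∧
            nn + min (j-1) (ca i0) = N) with hInv
      have inv1 : Inv 1 := by
        refine ⟨τa, τe, hI1 ▸ hIτ, fun _ => rfl, fun _ => rfl,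
          fun i _ => hga1 i, fun i _ => hge1 i, hloops,
          fun i σf h => h, ⟨N, hcount, by simp⟩⟩
      have step : ∀ j, 1 ≤ j → j ≤ B → Inv j → Inv (j+1) := by
        intro j hj1 hjB hinv
        obtain ⟨υa, υe, hIi, hfa, hfe, hga, hge, hlp, hcomp, nn, hcnt, hcnteq⟩ := hinv
        -- next states for the first k universal copies
        have hnext : ∀ i : Fin k, ∃ s,
            BigStep (if j ≤ ca i then Pa i else Cmd.skip) (υa (Fin.castAdd m i)) s ∧
            BigStep (.loop (ba i) (Pa i)) s (σmid i) ∧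
            (i = i0 → ∃ nn', LoopIter (ba i0) (Pa i0) nn' s (σmid i0) ∧
              nn' + (if j ≤ ca i then 1 else 0) = nn) := by
          intro i
          by_cases hj : j ≤ ca i
          · by_cases hii : i = i0
            · subst hii
              cases nn with
              | zero => exact absurd (hga i0 hj) hcnt.1
              | succ nn' =>
                obtain ⟨hbg, s, hPs, hIt⟩ := hcnt
                exact ⟨s, by simpa [hj] using hPs, hIt.bigStep,
                  fun _ => ⟨nn', hIt, by simp [hj]⟩⟩
            · obtain ⟨s, hPs, hrest'⟩ := loop_inv_true (hga i hj) (hlp i)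
              exact ⟨s, by simpa [hj] using hPs, hrest', fun h => absurd h hii⟩
          · refine ⟨υa (Fin.castAdd m i), by simpa [hj] using BigStep.skip _,
              hlp i, fun h => ⟨nn, ?_, by simp [hj]⟩⟩
            subst h; exact hcnt
        choose sA hsA1 hsA2 hsA3 using hnext
        set υa' : Fin (k+m) → State :=
          Fin.append sA (fun i => υa (Fin.natAdd k i)) with hυa'
        have hrunA : ∀ x : Fin (k+m),
            BigStep (Fin.append (fun i : Fin k => if j ≤ ca i then Pa i else Cmd.skip)
              (fun _ : Fin m => Cmd.skip) x) (υa x) (υa' x) := by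
          intro x
          refine Fin.addCases (fun i => ?_) (fun i => ?_) x
          · simp only [hυa', Fin.append_left]; exact hsA1 i
          · simp only [hυa', Fin.append_right]; exact .skip _
        obtain ⟨υe', hrunE, hIi', hga', hge'⟩ :=
          hstep j hj1 hjB υa υe ⟨hIi, hga, hge⟩ υa' hrunA
        have hEfix : ∀ i : Fin n, υe' (Fin.natAdd l i) = υe (Fin.natAdd l i) := by
          intro i
          have := hrunE (Fin.natAdd l i)
          rw [Fin.append_right] at this
          exact skip_inv this
        have hEcast : ∀ i : Fin l,
            BigStep (if j ≤ ce i then Pe i else Cmd.skip) (υe (Fin.castAdd n i))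
              (υe' (Fin.castAdd n i)) := by
          intro i
          have := hrunE (Fin.castAdd n i)
          rwa [Fin.append_left] at this
        have hAcast : ∀ i : Fin k, υa' (Fin.castAdd m i) = sA i := fun i =>
          Fin.append_left _ _ i
        have hAfix : ∀ i : Fin m, υa' (Fin.natAdd k i) = υa (Fin.natAdd k i) := fun i =>
          Fin.append_right _ _ i
        refine ⟨υa', υe', hIi', ?_, ?_, ?_, ?_, ?_, ?_, ?_⟩
        · intro i; rw [hAfix i]; exact hfa i
        · intro i; rw [hEfix i]; exact hfe i
        · intro i hi; exact hga' i (by omega)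
        · intro i hi; exact hge' i (by omega)
        · intro i; rw [hAcast i]; exact hsA2 i
        · intro i σf hf
          by_cases hj : j ≤ ce i
          · have hPe : BigStep (Pe i) (υe (Fin.castAdd n i)) (υe' (Fin.castAdd n i)) := by
              simpa [hj] using hEcast i
            exact hcomp i σf (.loopTrue _ _ _ _ _ (hge i hj) hPe hf)
          · have : υe' (Fin.castAdd n i) = υe (Fin.castAdd n i) :=
              skip_inv (by simpa [hj] using hEcast i)
            rw [this] at hf
            exact hcomp i σf hf
        · obtain ⟨nn', hIt', heq'⟩ := hsA3 i0 rfl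
          refine ⟨nn', by rwa [hAcast i0], ?_⟩
          by_cases hj : j ≤ ca i0 <;> simp [hj] at heq' <;> omega
      have chain : ∀ t, t ≤ B → Inv (t+1) := by
        intro t
        induction t with
        | zero => intro _; exact inv1
        | succ t ih =>
          intro ht
          exact step (t+1) (by omega) (by omega) (ih (by omega))
      obtain ⟨υa, υe, hIi, hfa, hfe, _, _, hlp, hcomp, nn, hcnt, hcnteq⟩ :=
        chain B le_rfl
      have hIυ : I υa υe := by rwa [hIB] at hIi
      have hnnlt : nn < N := by
        have h1 := (hca i0).1
        have h2 := (hca i0).2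
        omega
      obtain ⟨τe'', he1, he2, hIfin, hnba, hnbe⟩ :=
        IH nn hnnlt υa υe σmid hIυ hlp hcnt
      have hfun : (fun i => υa (Fin.natAdd k i)) = (fun i => τa (Fin.natAdd k i)) :=
        funext hfa
      refine ⟨τe'', fun i => hcomp i _ (he1 i), ?_, ?_, hnba, hnbe⟩
      · intro i; rw [he2 i]; exact hfe i
      · rwa [hfun] at hIfin
    · -- guard of copy 0 is false: all guards are false, all loops are done
      have hga : ∀ i : Fin k, ¬ ba i (τa (Fin.castAdd m i)) := fun i h =>
        hb0 (((hsim τa τe hIτ).1 i).mp h)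
      have hge : ∀ i : Fin l, ¬ be i (τe (Fin.castAdd n i)) := fun i h =>
        hb0 (((hsim τa τe hIτ).2 i).mp h)
      have hmid : ∀ i : Fin k, σmid i = τa (Fin.castAdd m i) := fun i =>
        loop_inv_false (hga i) (hloops i)
      have happ : Fin.append σmid (fun i => τa (Fin.natAdd k i)) = τa := by
        funext x
        refine Fin.addCases (fun i => ?_) (fun i => ?_) x
        · rw [Fin.append_left]; exact hmid i
        · rw [Fin.append_right]
      refine ⟨τe, fun i => .loopFalse _ _ _ (hge i), fun _ => rfl, ?_, ?_, hge⟩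
      · rwa [happ]
      · intro i; rw [hmid i]; exact hga i
  -- now the theorem itself
  intro σa σe hΦ σa' hrun
  have hI0 := hinit _ _ hΦ
  have hsegs : ∀ i : Fin k, ∃ τ,
      BigStep (.loop (ba i) (Pa i)) (σa (Fin.castAdd m i)) τ ∧
      BigStep (Qa i) τ (σa' (Fin.castAdd m i)) := by
    intro i
    have h := hrun (Fin.castAdd m i)
    rw [Fin.append_left] at h
    exact seq_inv h
  choose σmid hL hQ using hsegs
  obtain ⟨N, hN⟩ := bigStep_loopIter (hL i0)
  obtain ⟨τe', hEloop, hEfroz, hIfin, hnba, hnbe⟩ := main N σa σe σmid hI0 hL hN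
  obtain ⟨σe'', hrunE, hΨ⟩ :=
    hrest (Fin.append σmid (fun i => σa (Fin.natAdd k i))) τe'
      ⟨hIfin, fun i => by rw [Fin.append_left]; exact hnba i, hnbe⟩
      σa'
      (by
        intro x
        refine Fin.addCases (fun i => ?_) (fun i => ?_) x
        · rw [Fin.append_left, Fin.append_left]; exact hQ i
        · rw [Fin.append_right, Fin.append_right]
          have h := hrun (Fin.natAdd k i)
          rwa [Fin.append_right] at h)
  refine ⟨σe'', ?_, hΨ⟩
  intro x
  refine Fin.addCases (fun i => ?_) (fun i => ?_) x
  · rw [Fin.append_left]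
    have hq := hrunE (Fin.castAdd n i)
    rw [Fin.append_left] at hq
    exact .seq _ _ _ _ _ (hEloop i) hq
  · rw [Fin.append_right]
    have hq := hrunE (Fin.natAdd l i)
    rw [Fin.append_right] at hq
    rwa [hEfroz i] at hq
end

section
/- Parametric postconditions prove FEHTs: let (Ξ,C) be a parametric postcondition for (Φ, P₁,…,P_{k+l}). If for all states σ'₁,…,σ'_k there exists a parameter evaluation κ ∈ C such that for all states σ'_{k+1},…,σ'_{k+l}, (σ'₁,…,σ'_{k+l}) ⊨ Ξ[κ] implies (σ'₁,…,σ'_{k+l}) ⊨ Ψ, then the FEHT ⟨Φ⟩ P₁ ⊛ … ⊛ P_k ⊛∃ P_{k+1} ⊛ … ⊛ P_{k+l} ⟨Ψ⟩ is valid. -/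
/-- (Ξ,C) is a parametric postcondition for (Φ, Pa, Pe): Ξ assigns to each
parameter evaluation κ an assertion Ξ κ, and C is a set of parameter
evaluations. -/
def IsParamPost {k l : ℕ} {Params : Type}
    (Ξ : (Params → ℤ) → (Fin k → State) → (Fin l → State) → Prop)
    (C : Set (Params → ℤ))
    (Φ : (Fin k → State) → (Fin l → State) → Prop)
    (Pa : Fin k → Cmd) (Pe : Fin l → Cmd) : Prop :=
  ∀ σa σe, Φ σa σe →
    ∀ σa' : Fin k → State, (∀ i, BigStep (Pa i) (σa i) (σa' i)) →
      ∀ κ ∈ C,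
        (∃ σe' : Fin l → State, Ξ κ σa' σe') ∧
        (∀ σe' : Fin l → State, Ξ κ σa' σe' → ∀ i, BigStep (Pe i) (σe i) (σe' i))

/-- Parametric postconditions prove FEHTs. -/
theorem param_post_proves_FEHT (k l : ℕ) (Params : Type)
    (Ξ : (Params → ℤ) → (Fin k → State) → (Fin l → State) → Prop)
    (C : Set (Params → ℤ))
    (Φ Ψ : (Fin k → State) → (Fin l → State) → Prop)
    (Pa : Fin k → Cmd) (Pe : Fin l → Cmd)
    (hpp : IsParamPost Ξ C Φ Pa Pe)
    (hq : ∀ σa' : Fin k → State, ∃ κ ∈ C,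
        ∀ σe' : Fin l → State, Ξ κ σa' σe' → Ψ σa' σe') :
    FEHT Pa Pe Φ Ψ := by
  intro σa σe hΦ σa' ha
  obtain ⟨κ, hκC, hκ⟩ := hq σa'
  obtain ⟨⟨σe', hΞ⟩, hall⟩ := hpp σa σe hΦ σa' ha κ hκC
  exact ⟨σe', hall σe' hΞ, hκ σe' hΞ⟩
end

section
/- Soundness of the underapproximate while rule: let (Φ_i)_{i ∈ ℕ} be a family of assertions on states such that (1) for every i ∈ ℕ the underapproximate Hoare triple ⟨Φ_{i+1}⟩ P ⟨Φ_i⟩ is valid, (2) for every i ≥ 1, every state satisfying Φ_i satisfies the loop guard b, and (3) every state satisfying Φ₀ satisfies ¬b. Then the underapproximate Hoare triple ⟨∃n ∈ ℕ. Φ_n⟩ while(b,P) ⟨Φ₀⟩ is valid, where ∃n ∈ ℕ. Φ_n holds of a state iff some Φ_n does. -/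
/-- Soundness of the underapproximate while rule. -/
theorem uht_while_sound (Φi : ℕ → State → Prop) (b : State → Prop) (P : Cmd)
    (h1 : ∀ i : ℕ, ∀ σ, Φi (i + 1) σ → ∃ σ', BigStep P σ σ' ∧ Φi i σ')
    (h2 : ∀ i : ℕ, 1 ≤ i → ∀ σ, Φi i σ → b σ)
    (h3 : ∀ σ, Φi 0 σ → ¬ b σ) :
    ∀ σ, (∃ n : ℕ, Φi n σ) →
      ∃ σ', BigStep (Cmd.loop b P) σ σ' ∧ Φi 0 σ' := by

  intro σ ⟨n, hn⟩
  induction n generalizing σ with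
  | zero => exact ⟨σ, BigStep.loopFalse b P σ (h3 σ hn), hn⟩
  | succ m ih =>
    obtain ⟨σ', hstep, hΦ⟩ := h1 m σ hn
    obtain ⟨σ'', hloop, h0⟩ := ih σ' hΦ
    exact ⟨σ'', BigStep.loopTrue b P σ σ' σ'' (h2 (m+1) (Nat.le_add_left 1 m) σ hn) hstep hloop, h0⟩
end
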